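/- arXiv:1712.02948 — 2 statements merged into one kernel-verified Lean document; each statement's English description precedes it below -/
import Mathlib

section
/- Let H₁, H₂, H₃ be Hilbert spaces and T : H₁ → H₂, S : H₂ → H₃ closed densely defined linear operators with S∘T = 0. Suppose there is c > 0 such that ‖h‖²_{H₂} ≤ c(‖T*h‖²_{H₁} + ‖Sh‖²_{H₃}) for all h ∈ D(T*) ∩ D(S). Then for every g ∈ ker S and every h ∈ D(T*) ∩ D(S), one has |⟨g,h⟩_{H₂}| ≤ √c · ‖g‖_{H₂} · ‖T*h‖_{H₁}. -/
open scoped ComplexInnerProductSpace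

/-! Project `h` onto the closed subspace `ker S`, which contains `range T`. The remainder is
orthogonal to `range T`, hence lies in `ker T*`, so the projection `k` lies in
`D(T*) ∩ ker S` with `T* k = T* h`. The a priori estimate then gives `‖k‖ ≤ √c ‖T* h‖`, and
`⟪g, h⟫ = ⟪g, k⟫` for `g ∈ ker S`. -/

open scoped InnerProductSpace LinearPMap

namespace LinearPMap

section Kernel

variable {R E F : Type*} [Ring R] [AddCommGroup E] [Module R E] [AddCommGroup F] [Module R F]

def ker (f : E →ₗ.[R] F) : Submodule R E :=
  f.graph.comap (LinearMap.inl R E F)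

theorem mem_ker {f : E →ₗ.[R] F} {x : E} : x ∈ f.ker ↔ ∃ hx : x ∈ f.domain, f ⟨x, hx⟩ = 0 := by
  change (x, (0 : F)) ∈ f.graph ↔ _
  rw [mem_graph_iff]
  constructor
  · rintro ⟨y, rfl, hy⟩
    exact ⟨y.2, hy⟩
  · rintro ⟨hx, hfx⟩
    exact ⟨⟨x, hx⟩, rfl, hfx⟩

theorem isClosed_ker [TopologicalSpace E] [TopologicalSpace F] [ContinuousAdd E]
    {f : E →ₗ.[R] F} (hf : _root_.IsClosed (f.graph : Set (E × F))) :
    _root_.IsClosed (f.ker : Set E) :=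
  hf.preimage (continuous_id.prodMk continuous_const)

end Kernel

section Adjoint

variable {𝕜 E F : Type*} [RCLike 𝕜] [NormedAddCommGroup E] [InnerProductSpace 𝕜 E]
  [CompleteSpace E] [NormedAddCommGroup F] [InnerProductSpace 𝕜 F] {T : E →ₗ.[𝕜] F}

theorem adjoint_apply_eq_zero_of_orthogonal_range {y : F} (hy : ∀ x : T.domain, ⟪y, T x⟫_𝕜 = 0) :
    ∃ hy' : y ∈ T†.domain, T† ⟨y, hy'⟩ = 0 := by
  have hinner : ∀ x : T.domain, ⟪(0 : E), x⟫_𝕜 = ⟪y, T x⟫_𝕜 := by simp [hy]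
  refine ⟨mem_adjoint_domain_of_exists y ⟨0, hinner⟩, ?_⟩
  by_cases hT : Dense (T.domain : Set E)
  · exact adjoint_apply_eq hT _ hinner
  · exact adjoint_apply_of_not_dense hT _

theorem adjoint_apply_starProjection (K : Submodule 𝕜 F) [K.HasOrthogonalProjection]
    (hTK : ∀ x : T.domain, (T x : F) ∈ K) {y : F} (hy : y ∈ T†.domain) :
    ∃ hPy : K.starProjection y ∈ T†.domain, T† ⟨K.starProjection y, hPy⟩ = T† ⟨y, hy⟩ := by
  obtain ⟨hw, hTw⟩ := adjoint_apply_eq_zero_of_orthogonal_range (T := T)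
    (y := y - K.starProjection y) fun x =>
      inner_eq_zero_symm.1 (K.sub_starProjection_mem_orthogonal y _ (hTK x))
  have hdecomp : (⟨K.starProjection y, by simpa using sub_mem hy hw⟩ : T†.domain) =
      ⟨y, hy⟩ - ⟨y - K.starProjection y, hw⟩ := by
    ext; simp
  exact ⟨_, by rw [hdecomp, map_sub, hTw, sub_zero]⟩

end Adjoint

end LinearPMap

theorem Submodule.inner_starProjection_right_of_mem {𝕜 E : Type*} [RCLike 𝕜]
    [NormedAddCommGroup E] [InnerProductSpace 𝕜 E] (K : Submodule 𝕜 E) [K.HasOrthogonalProjection]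
    {g : E} (hg : g ∈ K) (y : E) : ⟪g, K.starProjection y⟫_𝕜 = ⟪g, y⟫_𝕜 := by
  rw [← K.inner_starProjection_left_eq_right, starProjection_eq_self_iff.2 hg]

theorem Real.le_sqrt_mul_of_sq_le_mul_sq {x a c : ℝ} (hx : 0 ≤ x) (ha : 0 ≤ a)
    (h : x ^ 2 ≤ c * a ^ 2) : x ≤ √c * a := by
  calc x = √(x ^ 2) := (Real.sqrt_sq hx).symm
    _ ≤ √(c * a ^ 2) := Real.sqrt_le_sqrt h
    _ = √c * a := by rw [Real.sqrt_mul' c (sq_nonneg a), Real.sqrt_sq ha]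

theorem hormander_basic_estimate_general
    {H1 H2 H3 : Type*}
    [NormedAddCommGroup H1] [InnerProductSpace ℂ H1] [CompleteSpace H1]
    [NormedAddCommGroup H2] [InnerProductSpace ℂ H2] [CompleteSpace H2]
    [NormedAddCommGroup H3] [InnerProductSpace ℂ H3]
    (T : H1 →ₗ.[ℂ] H2) (S : H2 →ₗ.[ℂ] H3)
    (hSclosed : IsClosed (S.graph : Set (H2 × H3)))
    (hST : ∀ x : T.domain, ∃ hx : (T x : H2) ∈ S.domain, S ⟨T x, hx⟩ = 0)
    (c : ℝ)
    (hest : ∀ (h : H2) (h1 : h ∈ T.adjoint.domain) (h2 : h ∈ S.domain),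
      ‖h‖ ^ 2 ≤ c * (‖T.adjoint ⟨h, h1⟩‖ ^ 2 + ‖S ⟨h, h2⟩‖ ^ 2))
    (g : H2) (hgdom : g ∈ S.domain) (hg : S ⟨g, hgdom⟩ = 0)
    (h : H2) (h1 : h ∈ T.adjoint.domain) (h2 : h ∈ S.domain) :
    ‖(inner ℂ g h : ℂ)‖ ≤ Real.sqrt c * ‖g‖ * ‖T.adjoint ⟨h, h1⟩‖ := by
  let K := S.ker
  have : CompleteSpace K := (LinearPMap.isClosed_ker hSclosed).completeSpace_coe
  set k := K.starProjection h
  obtain ⟨hk, hTk⟩ := T.adjoint_apply_starProjection K (fun x => LinearPMap.mem_ker.2 (hST x)) h1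
  obtain ⟨hkS, hSk⟩ := LinearPMap.mem_ker.1 (K.starProjection_apply_mem h)
  have hk_le : ‖k‖ ≤ √c * ‖T.adjoint ⟨h, h1⟩‖ := by
    refine Real.le_sqrt_mul_of_sq_le_mul_sq (norm_nonneg _) (norm_nonneg _) ?_
    have := hest k hk hkS
    rwa [hTk, hSk, norm_zero, zero_pow two_ne_zero, add_zero] at this
  calc ‖⟪g, h⟫_ℂ‖ = ‖⟪g, k⟫_ℂ‖ := by
        rw [K.inner_starProjection_right_of_mem (LinearPMap.mem_ker.2 ⟨hgdom, hg⟩)]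
    _ ≤ ‖g‖ * ‖k‖ := norm_inner_le_norm g k
    _ ≤ ‖g‖ * (√c * ‖T.adjoint ⟨h, h1⟩‖) := by gcongr
    _ = √c * ‖g‖ * ‖T.adjoint ⟨h, h1⟩‖ := by ring

/-- Hörmander's basic inequality: `T : H₁ → H₂`, `S : H₂ → H₃` closed densely
defined operators with `S ∘ T = 0` and the a priori estimate
`‖h‖² ≤ c(‖T*h‖² + ‖Sh‖²)` on `D(T*) ∩ D(S)`.  Then for every `g ∈ ker S` and
every `h ∈ D(T*) ∩ D(S)`, `|⟨g,h⟩| ≤ √c ‖g‖ ‖T*h‖`. -/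
theorem hormander_basic_estimate
    {H1 H2 H3 : Type*}
    [NormedAddCommGroup H1] [InnerProductSpace ℂ H1] [CompleteSpace H1]
    [NormedAddCommGroup H2] [InnerProductSpace ℂ H2] [CompleteSpace H2]
    [NormedAddCommGroup H3] [InnerProductSpace ℂ H3] [CompleteSpace H3]
    (T : H1 →ₗ.[ℂ] H2) (S : H2 →ₗ.[ℂ] H3)
    (hTdense : Dense (T.domain : Set H1)) (hSdense : Dense (S.domain : Set H2))
    (hTclosed : IsClosed (T.graph : Set (H1 × H2)))
    (hSclosed : IsClosed (S.graph : Set (H2 × H3)))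
    (hST : ∀ x : T.domain, ∃ hx : (T x : H2) ∈ S.domain, S ⟨T x, hx⟩ = 0)
    (c : ℝ) (hc : 0 < c)
    (hest : ∀ (h : H2) (h1 : h ∈ T.adjoint.domain) (h2 : h ∈ S.domain),
      ‖h‖ ^ 2 ≤ c * (‖T.adjoint ⟨h, h1⟩‖ ^ 2 + ‖S ⟨h, h2⟩‖ ^ 2))
    (g : H2) (hgdom : g ∈ S.domain) (hg : S ⟨g, hgdom⟩ = 0)
    (h : H2) (h1 : h ∈ T.adjoint.domain) (h2 : h ∈ S.domain) :
    ‖(inner ℂ g h : ℂ)‖ ≤ Real.sqrt c * ‖g‖ * ‖T.adjoint ⟨h, h1⟩‖ :=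
  hormander_basic_estimate_general T S hSclosed hST c hest g hgdom hg h h1 h2
end

section
/- Let χ : ℝ → ℝ be a convex increasing function of class C¹ and let ν : (−∞, c) → [0,∞) be a monotone increasing function arising as ν(r) = ∫_{B_r} θ for a positive measure θ (so that θ((−∞,r]) = ν(r) in the pushforward sense). Then ∫_{(−∞,r)} χ'(t) dν(t) + χ'(r−0)·(ν(r) − ν(r−)) ≤ χ'(r−0)·ν(r); in particular, for ν continuous, ∫_{B_r} (χ∘φ)-weighted mass equals at most χ'(r−0)·ν(φ,r,T), specializing with χ(t) = e^{2t} to ν(φ,r,T) = e^{−2r} ∫_{B_{r,φ}} T∧(½ dd^c e^{2φ}). -/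
open MeasureTheory Set

/-! The derivative of a differentiable convex increasing function is nonnegative and nondecreasing, so on
`(-∞, r)` it is bounded by `χ'(r)`; integrating this bound against `θ` over `(-∞, r)` and adding
the atom `θ {r}` weighted by `χ'(r)` gives `χ'(r) · θ((-∞, r])`. -/

lemma setIntegral_Iio_le_mul_measureReal {θ : Measure ℝ} {f : ℝ → ℝ} {r : ℝ}
    (hθ : θ (Iio r) < ⊤) (hf₀ : ∀ t < r, 0 ≤ f t) (hf : ∀ t < r, f t ≤ f r) :
    ∫ t in Iio r, f t ∂θ ≤ f r * θ.real (Iio r) :=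
  (le_abs_self _).trans <| norm_setIntegral_le_of_norm_le_const hθ fun t ht => by
    rw [Real.norm_of_nonneg (hf₀ t ht)]
    exact hf t ht

lemma measureReal_Iic_eq_add_singleton {θ : Measure ℝ} {r : ℝ} (hθ : θ (Iic r) ≠ ⊤) :
    θ.real (Iic r) = θ.real (Iio r) + θ.real {r} := by
  rw [← Iio_union_right] at hθ ⊢
  exact measureReal_union (by simp) (measurableSet_singleton r)
    (measure_ne_top_of_subset subset_union_left hθ)
    (measure_ne_top_of_subset subset_union_right hθ)

lemma setIntegral_Iio_add_mul_singleton_le {θ : Measure ℝ} {f : ℝ → ℝ} {r : ℝ}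
    (hθ : θ (Iic r) ≠ ⊤) (hf₀ : ∀ t < r, 0 ≤ f t) (hf : ∀ t < r, f t ≤ f r) :
    ∫ t in Iio r, f t ∂θ + f r * θ.real {r} ≤ f r * θ.real (Iic r) := by
  have hIio : θ (Iio r) < ⊤ := (measure_mono Iio_subset_Iic_self).trans_lt hθ.lt_top
  rw [measureReal_Iic_eq_add_singleton hθ, mul_add]
  gcongr
  exact setIntegral_Iio_le_mul_measureReal hIio hf₀ hf

theorem convex_weight_mass_estimate_general
    (χ : ℝ → ℝ) (hconv : ConvexOn ℝ Set.univ χ) (hmono : Monotone χ)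
    (hdiff : Differentiable ℝ χ)
    (θ : Measure ℝ) (r : ℝ)
    (hfin : θ (Iic r) ≠ ⊤) :
    ((∫ t in Iio r, deriv χ t ∂θ) + deriv χ r * (θ {r}).toReal
        ≤ deriv χ r * (θ (Iic r)).toReal) ∧
    (θ {r} = 0 →
      (∫ t in Iio r, 2 * Real.exp (2 * t) ∂θ)
        ≤ 2 * Real.exp (2 * r) * (θ (Iic r)).toReal) := by
  have hderiv_le : ∀ t < r, deriv χ t ≤ deriv χ r := fun t ht =>
    hconv.monotoneOn_deriv (fun x _ => hdiff x) trivial trivial ht.le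
  refine ⟨setIntegral_Iio_add_mul_singleton_le hfin (fun _ _ => hmono.deriv_nonneg) hderiv_le,
    fun hatom => ?_⟩
  have hexp := setIntegral_Iio_add_mul_singleton_le (f := fun t => 2 * Real.exp (2 * t)) hfin
    (fun _ _ => by positivity) (fun t ht => by gcongr)
  simpa [measureReal_def, hatom] using hexp

/-- Change of weight estimate for Lelong numbers (Demailly's Formula (5.5)):
if `χ` is a convex increasing `C¹` function and `ν(r) = θ((−∞,r])` for a
positive measure `θ` (finite up to level `r < c`), then
`∫_{(−∞,r)} χ'(t) dθ(t) + χ'(r−0)·(ν(r) − ν(r−)) ≤ χ'(r−0)·ν(r)`;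
in particular, specializing to `χ(t) = e^{2t}`,
`∫_{(−∞,r)} 2e^{2t} dθ(t) ≤ 2e^{2r}·ν(r)` when `θ({r}) = 0`. -/
theorem convex_weight_mass_estimate
    (χ : ℝ → ℝ) (hconv : ConvexOn ℝ Set.univ χ) (hmono : Monotone χ)
    (hdiff : Differentiable ℝ χ) (hC1 : Continuous (deriv χ))
    (θ : Measure ℝ) (c r : ℝ) (hr : r < c)
    (hfin : θ (Iic r) ≠ ⊤) :
    ((∫ t in Iio r, deriv χ t ∂θ) + deriv χ r * (θ {r}).toReal
        ≤ deriv χ r * (θ (Iic r)).toReal) ∧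
    (θ {r} = 0 →
      (∫ t in Iio r, 2 * Real.exp (2 * t) ∂θ)
        ≤ 2 * Real.exp (2 * r) * (θ (Iic r)).toReal) :=
  convex_weight_mass_estimate_general χ hconv hmono hdiff θ r hfin
end
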